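/- Consider the quandle on {a,b,c,d} with matrix [a,a,a,a; b,b,d,c; c,d,c,b; d,c,b,d]. If ≤ is a compatible quasi-order and some two distinct elements of {b,c,d} are comparable, then b, c, d are all mutually ≤-equivalent. -/

import Mathlib

/-!
Right translation by `z` is monotone for a compatible reflexive relation, and on `{b, c, d}` the
quandle is dihedral: right translation by any of the three elements fixes it and swaps the other
two. A single comparison `x ≤ y` is therefore reflected by the third element into `y ≤ x`, and
translating by `x` turns the pair `x ≤ y`, `y ≤ x` into `x ≤ w`, `w ≤ x` for the remaining `w`.
-/

def CompatibleQuasiOrder {Q : Type*} (op : Q → Q → Q) (le : Q → Q → Prop) : Prop :=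
  ∀ x x' y y' : Q, le x x' → le y y' → le (op x y) (op x' y')

def q4c : Fin 4 → Fin 4 → Fin 4 :=
  ![![0,0,0,0], ![1,1,3,2], ![2,3,2,1], ![3,2,1,3]]

section

variable {Q : Type*} {op : Q → Q → Q} {le : Q → Q → Prop}

theorem CompatibleQuasiOrder.rel_op_right (hrefl : ∀ x, le x x)
    (hcomp : CompatibleQuasiOrder op le) {x x' : Q} (h : le x x') (y : Q) :
    le (op x y) (op x' y) :=
  hcomp x x' y y h (hrefl y)

/-- `S` has exactly three elements and `op` restricts to the dihedral quandle of order 3 on it. -/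
structure IsDihedralTriple (op : Q → Q → Q) (S : Set Q) : Prop where
  op_self : ∀ x ∈ S, op x x = x
  op_swap : ∀ x ∈ S, ∀ y ∈ S, ∀ z ∈ S, x ≠ y → x ≠ z → y ≠ z → op x z = y
  exists_ne : ∀ x ∈ S, ∀ y ∈ S, ∃ z ∈ S, z ≠ x ∧ z ≠ y

namespace IsDihedralTriple

variable {S : Set Q} (hS : IsDihedralTriple op S) (hrefl : ∀ x, le x x)
  (hcomp : CompatibleQuasiOrder op le)
include hS hrefl hcomp

theorem rel_symm {x y : Q} (hx : x ∈ S) (hy : y ∈ S) (hxy : x ≠ y) (h : le x y) : le y x := by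
  obtain ⟨z, hz, hzx, hzy⟩ := hS.exists_ne x hx y hy
  simpa only [hS.op_swap x hx y hy z hz hxy hzx.symm hzy.symm,
    hS.op_swap y hy x hx z hz hxy.symm hzy.symm hzx.symm] using hcomp.rel_op_right hrefl h z

theorem rel_and_rel {x y : Q} (hx : x ∈ S) (hy : y ∈ S) (hxy : x ≠ y) (h : le x y)
    {w : Q} (hw : w ∈ S) : le x w ∧ le w x := by
  have h' := hS.rel_symm hrefl hcomp hx hy hxy h
  by_cases hwx : w = x
  · subst hwx
    exact ⟨hrefl w, hrefl w⟩
  by_cases hwy : w = y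
  · subst hwy
    exact ⟨h, h'⟩
  have hyx : op y x = w := hS.op_swap y hy w hw x hx (Ne.symm hwy) (Ne.symm hxy) hwx
  constructor
  · simpa only [hS.op_self x hx, hyx] using hcomp.rel_op_right hrefl h x
  · simpa only [hS.op_self x hx, hyx] using hcomp.rel_op_right hrefl h' x

theorem rel_of_rel {x y : Q} (hx : x ∈ S) (hy : y ∈ S) (hxy : x ≠ y) (h : le x y) :
    ∀ u ∈ S, ∀ v ∈ S, le u v := by
  intro u hu v hv
  by_cases hux : u = x
  · subst hux
    exact (hS.rel_and_rel hrefl hcomp hu hy hxy h hv).1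
  exact (hS.rel_and_rel hrefl hcomp hu hx hux (hS.rel_and_rel hrefl hcomp hx hy hxy h hu).2 hv).1

end IsDihedralTriple

end

theorem q4c_isDihedralTriple : IsDihedralTriple q4c ({1, 2, 3} : Set (Fin 4)) := by
  constructor <;> simp only [Set.mem_insert_iff, Set.mem_singleton_iff] <;> decide

theorem stmt_16_general (le : Fin 4 → Fin 4 → Prop)
    (hrefl : Reflexive le)
    (hcomp : CompatibleQuasiOrder q4c le)
    (h : ∃ x y : Fin 4, x ≠ y ∧ x ∈ ({1,2,3} : Set (Fin 4)) ∧
        y ∈ ({1,2,3} : Set (Fin 4)) ∧ (le x y ∨ le y x)) :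
    ∀ x ∈ ({1,2,3} : Set (Fin 4)), ∀ y ∈ ({1,2,3} : Set (Fin 4)), le x y := by
  obtain ⟨x, y, hxy, hx, hy, hle | hle⟩ := h
  · exact q4c_isDihedralTriple.rel_of_rel hrefl hcomp hx hy hxy hle
  · exact q4c_isDihedralTriple.rel_of_rel hrefl hcomp hy hx hxy.symm hle

theorem stmt_16 (le : Fin 4 → Fin 4 → Prop)
    (hrefl : Reflexive le) (htrans : Transitive le)
    (hcomp : CompatibleQuasiOrder q4c le)
    (h : ∃ x y : Fin 4, x ≠ y ∧ x ∈ ({1,2,3} : Set (Fin 4)) ∧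
        y ∈ ({1,2,3} : Set (Fin 4)) ∧ (le x y ∨ le y x)) :
    ∀ x ∈ ({1,2,3} : Set (Fin 4)), ∀ y ∈ ({1,2,3} : Set (Fin 4)), le x y :=
  stmt_16_general le hrefl hcomp h
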